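/- arXiv:2207.07021 — 3 statements merged into one kernel-verified Lean document; each statement's English description precedes it below -/
import Mathlib

section
/- The group GL₂(ℤ/3ℤ) has exactly 48 elements, and exactly 27 of them satisfy condition (H); in particular, the proportion of elements of GL₂(ℤ/3ℤ) satisfying condition (H) is 9/16. -/
/-! Over `ℤ/3ℤ` a nonzero determinant has order `1` or `2`, so condition (H) reduces to the
nonvanishing of `det (A - 1)` or `det (A ^ 2 - 1)`; identifying `GL₂(ℤ/3ℤ)` with the matrices of
nonzero determinant, the count is a finite check over the `81` matrices. -/

/-- Condition (H) on a matrix `A ∈ GL₂(ℤ/3ℤ)`: letting `f(A)` be the multiplicative order of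
`det A`, the eigenvalues `α, β` of `A` satisfy `α ^ f(A) + β ^ f(A) ≠ 2`; equivalently (since
`det(A) ^ f(A) = 1`), the matrix `A ^ f(A) - 1` is invertible. -/
def CondH (A : Matrix (Fin 2) (Fin 2) (ZMod 3)) : Prop :=
  IsUnit (A ^ orderOf A.det - 1)

theorem Matrix.card_GL_subtype {n K : Type*} [Fintype n] [DecidableEq n] [Field K]
    (P : Matrix n n K → Prop) :
    Nat.card {u : GL n K // P u} = Nat.card {A : Matrix n n K // A.det ≠ 0 ∧ P A} := by
  refine Nat.card_congr <|
    ((Submonoid.unitsTypeEquivIsUnitSubmonoid (M := Matrix n n K)).toEquiv.subtypeEquiv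
      fun _ => Iff.rfl).trans <|
      (Equiv.subtypeSubtypeEquivSubtypeInter (· ∈ IsUnit.submonoid _) P).trans <|
        Equiv.subtypeEquivRight fun A => ?_
  rw [IsUnit.mem_submonoid_iff, Matrix.isUnit_iff_isUnit_det, isUnit_iff_ne_zero]

theorem ZMod.orderOf_three_of_ne_zero {d : ZMod 3} (hd : d ≠ 0) :
    orderOf d = if d = 1 then 1 else 2 := by
  split_ifs with h1
  · simp [h1]
  · have : d = -1 := by decide +revert
    rw [this, orderOf_neg_one, ringChar.eq (ZMod 3) 3]; rfl

theorem condH_iff {A : Matrix (Fin 2) (Fin 2) (ZMod 3)} (hA : A.det ≠ 0) :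
    CondH A ↔ (A ^ (if A.det = 1 then 1 else 2) - 1).det ≠ 0 := by
  rw [CondH, ZMod.orderOf_three_of_ne_zero hA, Matrix.isUnit_iff_isUnit_det, isUnit_iff_ne_zero]

/-- `GL₂(ℤ/3ℤ)` has exactly `48` elements, exactly `27` of which satisfy condition (H);
in particular the proportion of elements of `GL₂(ℤ/3ℤ)` satisfying condition (H) is `9/16`. -/
theorem card_GL2_ZMod3_condH :
    Nat.card (GL (Fin 2) (ZMod 3)) = 48 ∧
    Nat.card {A : GL (Fin 2) (ZMod 3) // CondH (A : Matrix (Fin 2) (Fin 2) (ZMod 3))} = 27 ∧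
    (Nat.card {A : GL (Fin 2) (ZMod 3) // CondH (A : Matrix (Fin 2) (Fin 2) (ZMod 3))} : ℚ) /
      (Nat.card (GL (Fin 2) (ZMod 3)) : ℚ) = 9 / 16 := by
  have hGL : Nat.card (GL (Fin 2) (ZMod 3)) = 48 := by
    rw [Matrix.card_GL_field, ZMod.card]; decide
  have hH : Nat.card {A : GL (Fin 2) (ZMod 3) // CondH (A : Matrix (Fin 2) (Fin 2) (ZMod 3))}
      = 27 := by
    rw [Matrix.card_GL_subtype, Nat.card_congr (Equiv.subtypeEquivRight fun A =>
      and_congr_right condH_iff), Nat.card_eq_fintype_card]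
    decide
  exact ⟨hGL, hH, by rw [hGL, hH]; norm_num⟩
end

section
/- Let n ≥ 1 be an integer and let Gₙ = {(A₁, …, Aₙ) ∈ GL₂(ℤ/3ℤ)ⁿ : det A₁ = det A₂ = ⋯ = det Aₙ}. Then Gₙ has exactly 2·24ⁿ elements, and exactly 2·24ⁿ − 12ⁿ − 9ⁿ of these n-tuples have at least one component Aᵢ satisfying condition (H); in particular, the proportion of such tuples in Gₙ is 1 − (3ⁿ + 4ⁿ)/2^{3n+1}. -/
/-- The set `Gₙ = {(A₁, …, Aₙ) ∈ GL₂(ℤ/3ℤ)ⁿ : det A₁ = ⋯ = det Aₙ}`. -/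
def Gtuples (n : ℕ) : Set (Fin n → GL (Fin 2) (ZMod 3)) :=
  {v | ∀ i j : Fin n, ((v i : Matrix (Fin 2) (Fin 2) (ZMod 3)).det =
    (v j : Matrix (Fin 2) (Fin 2) (ZMod 3)).det)}

/-!
A tuple in `Gₙ` has a common determinant `d ∈ {1, 2}`, so `Gₙ` is the disjoint union of the two
`n`-fold products of the fibres `det⁻¹ d`, each of size `24`. For a `2 × 2` matrix,
`det (M ± 1) = det M ± tr M + 1`. Hence if `det M = 1` then `M - 1` is singular iff `tr M = 2`,
and if `det M = 2 = -1` then `M ^ 2 - 1 = (M + 1) (M - 1)` has determinant `-(tr M) ^ 2`, so it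
is singular iff `tr M = 0`. Condition (H) therefore fails on `9` matrices of determinant `1` and
on `12` of determinant `2`, and the tuples of `Gₙ` none of whose entries satisfy (H) number
`9ⁿ + 12ⁿ`.
-/

theorem Nat.card_subtype_units {M : Type*} [Monoid M] (p : M → Prop) :
    Nat.card {u : Mˣ // p u} = Nat.card {a : M // IsUnit a ∧ p a} :=
  Nat.card_congr <| (Equiv.subtypeEquiv Submonoid.unitsTypeEquivIsUnitSubmonoid.toEquiv
    fun _ => Iff.rfl).trans (Equiv.subtypeSubtypeEquivSubtypeInter _ p)

theorem Nat.card_subtype_and_add_card_subtype_and_not {α : Type*} [Finite α] (p q : α → Prop) :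
    Nat.card {a // p a ∧ q a} + Nat.card {a // p a ∧ ¬q a} = Nat.card {a // p a} := by
  classical
  rw [← Nat.card_sum, Nat.card_congr ((Equiv.subtypeSubtypeEquivSubtypeInter p q).symm.sumCongr
    (Equiv.subtypeSubtypeEquivSubtypeInter p fun a => ¬q a).symm),
    Nat.card_congr (Equiv.sumCompl _)]

theorem Nat.card_tuples_in_common_fiber {X D : Type*} [Finite X] [Fintype D] (f : X → D)
    (p : X → Prop) (n : ℕ) [NeZero n] :
    Nat.card {v : Fin n → X // (∀ i j, f (v i) = f (v j)) ∧ ∀ i, p (v i)} =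
      ∑ d, Nat.card {x // f x = d ∧ p x} ^ n := by
  set S := {v : Fin n → X // (∀ i j, f (v i) = f (v j)) ∧ ∀ i, p (v i)}
  have hfiber (d : D) : {w : S // f (w.1 0) = d} ≃ (Fin n → {x // f x = d ∧ p x}) :=
    (Equiv.subtypeSubtypeEquivSubtypeInter _ fun v => f (v 0) = d).trans <|
      (Equiv.subtypeEquivRight (q := fun v : Fin n → X => ∀ i, f (v i) = d ∧ p (v i)) fun v =>
        ⟨fun h i => ⟨(h.1.1 i 0).trans h.2, h.1.2 i⟩,
         fun h => ⟨⟨fun i j => (h i).1.trans (h j).1.symm, fun i => (h i).2⟩, (h 0).1⟩⟩).trans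
      (Equiv.subtypePiEquivPi (p := fun _ x => f x = d ∧ p x))
  calc Nat.card S = Nat.card (Σ d, {w : S // f (w.1 0) = d}) :=
        Nat.card_congr (Equiv.sigmaFiberEquiv _).symm
    _ = ∑ d, Nat.card {x // f x = d ∧ p x} ^ n := by
        simp only [Nat.card_sigma, Nat.card_congr (hfiber _), Nat.card_fun, Nat.card_fin]

section
variable {R : Type*} [CommRing R] (M : Matrix (Fin 2) (Fin 2) R)

theorem Matrix.det_sub_one_fin_two : (M - 1).det = M.det - M.trace + 1 := by
  simp only [det_fin_two, trace_fin_two, sub_apply, one_apply_eq, one_apply_ne, ne_eq,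
    zero_ne_one, one_ne_zero, not_false_eq_true, sub_zero]
  ring

theorem Matrix.det_add_one_fin_two : (M + 1).det = M.det + M.trace + 1 := by
  simp only [det_fin_two, trace_fin_two, add_apply, one_apply_eq, one_apply_ne, ne_eq,
    zero_ne_one, one_ne_zero, not_false_eq_true, add_zero]
  ring

end

theorem Matrix.GeneralLinearGroup.card_subtype {m K : Type*} [Fintype m] [DecidableEq m]
    [CommRing K] (p : Matrix m m K → Prop) (hp : ∀ M, p M → IsUnit M.det) :
    Nat.card {A : GL m K // p A} = Nat.card {M : Matrix m m K // p M} := by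
  rw [Nat.card_subtype_units]
  exact Nat.card_congr <| Equiv.subtypeEquivRight fun M =>
    ⟨And.right, fun h => ⟨M.isUnit_iff_isUnit_det.2 (hp M h), h⟩⟩

local notation "M₂" => Matrix (Fin 2) (Fin 2) (ZMod 3)

theorem ZMod.sum_univ_three {M : Type*} [AddCommMonoid M] (g : ZMod 3 → M) :
    ∑ d, g d = g 0 + g 1 + g 2 :=
  Fin.sum_univ_three g

theorem condH_iff_of_det_eq_one {M : M₂} (h : M.det = 1) : CondH M ↔ M.trace ≠ 2 := by
  rw [CondH, h, orderOf_one, pow_one, Matrix.isUnit_iff_isUnit_det, isUnit_iff_ne_zero,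
    Matrix.det_sub_one_fin_two, h]
  generalize M.trace = t
  revert t
  decide

theorem condH_iff_of_det_eq_two {M : M₂} (h : M.det = 2) : CondH M ↔ M.trace ≠ 0 := by
  have horder : orderOf (2 : ZMod 3) = 2 := orderOf_eq_prime (by decide) (by decide)
  rw [CondH, h, horder, sq, mul_self_sub_one, Matrix.isUnit_iff_isUnit_det, isUnit_iff_ne_zero,
    Matrix.det_mul, Matrix.det_add_one_fin_two, Matrix.det_sub_one_fin_two, h]
  generalize M.trace = t
  revert t
  decide

theorem card_det_eq_one : Nat.card {M : M₂ // M.det = 1} = 24 := by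
  simp only [Matrix.det_fin_two]
  rw [Nat.card_eq_fintype_card]
  decide

theorem card_det_eq_two : Nat.card {M : M₂ // M.det = 2} = 24 := by
  simp only [Matrix.det_fin_two]
  rw [Nat.card_eq_fintype_card]
  decide

theorem card_det_eq_one_trace_eq_two : Nat.card {M : M₂ // M.det = 1 ∧ M.trace = 2} = 9 := by
  simp only [Matrix.det_fin_two, Matrix.trace_fin_two]
  rw [Nat.card_eq_fintype_card]
  decide

theorem card_det_eq_two_trace_eq_zero : Nat.card {M : M₂ // M.det = 2 ∧ M.trace = 0} = 12 := by
  simp only [Matrix.det_fin_two, Matrix.trace_fin_two]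
  rw [Nat.card_eq_fintype_card]
  decide

theorem card_GL_det_eq_one : Nat.card {A : GL (Fin 2) (ZMod 3) // (A : M₂).det = 1} = 24 := by
  rw [Matrix.GeneralLinearGroup.card_subtype (fun M => M.det = 1) fun _ h => h ▸ isUnit_one,
    card_det_eq_one]

theorem card_GL_det_eq_two : Nat.card {A : GL (Fin 2) (ZMod 3) // (A : M₂).det = 2} = 24 := by
  rw [Matrix.GeneralLinearGroup.card_subtype (fun M => M.det = 2)
    fun _ h => h ▸ isUnit_iff_ne_zero.2 (by decide), card_det_eq_two]

theorem card_GL_det_eq_one_not_condH :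
    Nat.card {A : GL (Fin 2) (ZMod 3) // (A : M₂).det = 1 ∧ ¬CondH A} = 9 := by
  rw [Matrix.GeneralLinearGroup.card_subtype (fun M => M.det = 1 ∧ ¬CondH M)
    fun _ h => h.1 ▸ isUnit_one, ← card_det_eq_one_trace_eq_two]
  exact Nat.card_congr <| Equiv.subtypeEquivRight fun M =>
    and_congr_right fun h => by rw [condH_iff_of_det_eq_one h, not_not]

theorem card_GL_det_eq_two_not_condH :
    Nat.card {A : GL (Fin 2) (ZMod 3) // (A : M₂).det = 2 ∧ ¬CondH A} = 12 := by
  rw [Matrix.GeneralLinearGroup.card_subtype (fun M => M.det = 2 ∧ ¬CondH M)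
    fun _ h => h.1 ▸ isUnit_iff_ne_zero.2 (by decide), ← card_det_eq_two_trace_eq_zero]
  exact Nat.card_congr <| Equiv.subtypeEquivRight fun M =>
    and_congr_right fun h => by rw [condH_iff_of_det_eq_two h, not_not]

theorem card_Gtuples (n : ℕ) [NeZero n] : Nat.card (Gtuples n) = 2 * 24 ^ n := by
  have h := Nat.card_tuples_in_common_fiber (fun A : GL (Fin 2) (ZMod 3) => (A : M₂).det)
    (fun _ => True) n
  simp only [and_true, implies_true] at h
  refine h.trans <| (ZMod.sum_univ_three _).trans ?_
  have hzero : Nat.card {A : GL (Fin 2) (ZMod 3) // (A : M₂).det = 0} = 0 :=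
    Nat.card_eq_zero.2 <| .inl ⟨fun A => A.1.det_ne_zero A.2⟩
  rw [hzero, card_GL_det_eq_one, card_GL_det_eq_two, zero_pow (NeZero.ne n)]
  ring

theorem card_Gtuples_forall_not_condH (n : ℕ) [NeZero n] :
    Nat.card {v : Fin n → GL (Fin 2) (ZMod 3) // v ∈ Gtuples n ∧ ∀ i, ¬CondH (v i : M₂)} =
      12 ^ n + 9 ^ n := by
  refine (Nat.card_tuples_in_common_fiber (fun A : GL (Fin 2) (ZMod 3) => (A : M₂).det)
    (fun A => ¬CondH A) n).trans <| (ZMod.sum_univ_three _).trans ?_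
  have hzero : Nat.card {A : GL (Fin 2) (ZMod 3) // (A : M₂).det = 0 ∧ ¬CondH A} = 0 :=
    Nat.card_eq_zero.2 <| .inl ⟨fun A => A.1.det_ne_zero A.2.1⟩
  rw [hzero, card_GL_det_eq_one_not_condH, card_GL_det_eq_two_not_condH, zero_pow (NeZero.ne n)]
  ring

/-- For `n ≥ 1`, the set `Gₙ = {(A₁, …, Aₙ) ∈ GL₂(ℤ/3ℤ)ⁿ : det A₁ = ⋯ = det Aₙ}` has exactly
`2·24ⁿ` elements, exactly `2·24ⁿ − 12ⁿ − 9ⁿ` of which have at least one component satisfying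
condition (H); in particular the proportion of such tuples in `Gₙ` is
`1 − (3ⁿ + 4ⁿ)/2^(3n+1)`. -/
theorem card_tuples_GL2_ZMod3_condH (n : ℕ) (hn : 1 ≤ n) :
    Nat.card (Gtuples n) = 2 * 24 ^ n ∧
    Nat.card {v : Fin n → GL (Fin 2) (ZMod 3) //
      v ∈ Gtuples n ∧ ∃ i : Fin n, CondH (v i : Matrix (Fin 2) (Fin 2) (ZMod 3))} =
      2 * 24 ^ n - 12 ^ n - 9 ^ n ∧
    (Nat.card {v : Fin n → GL (Fin 2) (ZMod 3) //
      v ∈ Gtuples n ∧ ∃ i : Fin n, CondH (v i : Matrix (Fin 2) (Fin 2) (ZMod 3))} : ℚ) /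
      (Nat.card (Gtuples n) : ℚ) = 1 - ((3 : ℚ) ^ n + 4 ^ n) / 2 ^ (3 * n + 1) := by
  have : NeZero n := NeZero.of_pos hn
  have hsplit := Nat.card_subtype_and_add_card_subtype_and_not (· ∈ Gtuples n)
    fun v => ∃ i, CondH (v i : Matrix (Fin 2) (Fin 2) (ZMod 3))
  simp only [not_exists] at hsplit
  rw [card_Gtuples_forall_not_condH] at hsplit
  change _ = Nat.card (Gtuples n) at hsplit
  rw [card_Gtuples] at hsplit ⊢
  refine ⟨rfl, by omega, ?_⟩
  have hsplitℚ := congrArg (Nat.cast : ℕ → ℚ) hsplit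
  push_cast at hsplitℚ
  rw [eq_sub_of_add_eq hsplitℚ, pow_succ, pow_mul]
  push_cast
  field_simp
  ring_nf
  -- `ring_nf` evaluates numeral bases, so products such as `8 ^ n * 9 ^ n = 3 ^ n * 24 ^ n`
  -- are matched by merging them into single powers.
  simp only [← mul_pow]
  norm_num
end

section
/- Let S be the set of the following sixteen 2×2 matrices over ℤ/3ℤ (written by rows): [[1,0],[0,1]], [[2,2],[0,1]], [[1,1],[0,2]], [[2,0],[2,1]], [[1,0],[1,2]], [[2,0],[0,2]], [[2,2],[2,1]], [[1,1],[1,2]], [[2,1],[1,0]], [[1,2],[2,0]], [[0,2],[2,2]], [[0,1],[1,1]], [[0,2],[1,0]], [[0,1],[2,0]], [[1,2],[2,2]], [[2,1],[1,1]]. Then S is a subgroup of GL₂(ℤ/3ℤ) of order 16, and exactly 11 elements of S satisfy condition (H); in particular, the proportion of elements of S satisfying condition (H) is 11/16. -/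
/-- The set of sixteen matrices forming the image of the mod 3 Galois representation of the
congruent number elliptic curve `y² = x³ − x`. -/
def Scong : Set (Matrix (Fin 2) (Fin 2) (ZMod 3)) :=
  {!![1, 0; 0, 1], !![2, 2; 0, 1], !![1, 1; 0, 2], !![2, 0; 2, 1], !![1, 0; 1, 2],
    !![2, 0; 0, 2], !![2, 2; 2, 1], !![1, 1; 1, 2], !![2, 1; 1, 0], !![1, 2; 2, 0],
    !![0, 2; 2, 2], !![0, 1; 1, 1], !![0, 2; 1, 0], !![0, 1; 2, 0], !![1, 2; 2, 2],
    !![2, 1; 1, 1]}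

/-! Every claim is a finite computation over `ZMod 3` closed by `decide`. The one
non-computable ingredient, `orderOf` in `CondH`, is removed by the observation that in `ZMod 3`
the order of `d` is `d.val` (both are `0` for `d = 0`). -/

open Matrix

def scongFinset : Finset (Matrix (Fin 2) (Fin 2) (ZMod 3)) :=
  {!![1, 0; 0, 1], !![2, 2; 0, 1], !![1, 1; 0, 2], !![2, 0; 2, 1], !![1, 0; 1, 2],
    !![2, 0; 0, 2], !![2, 2; 2, 1], !![1, 1; 1, 2], !![2, 1; 1, 0], !![1, 2; 2, 0],
    !![0, 2; 2, 2], !![0, 1; 1, 1], !![0, 2; 1, 0], !![0, 1; 2, 0], !![1, 2; 2, 2],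
    !![2, 1; 1, 1]}

lemma Scong_eq_coe : Scong = ↑scongFinset := by
  simp [Scong, scongFinset]

lemma ZMod.orderOf_three_eq_val (x : ZMod 3) : orderOf x = x.val := by
  fin_cases x
  · exact orderOf_zero _
  · exact orderOf_one
  · exact orderOf_eq_prime (p := 2) (x := (2 : ZMod 3)) (by decide) (by decide)

lemma condH_iff_det_ne_zero (A : Matrix (Fin 2) (Fin 2) (ZMod 3)) :
    CondH A ↔ (A ^ A.det.val - 1).det ≠ 0 := by
  rw [CondH, ZMod.orderOf_three_eq_val, isUnit_iff_isUnit_det, isUnit_iff_ne_zero]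

lemma setOf_mem_Scong_and_condH :
    {A | A ∈ Scong ∧ CondH A} =
      ↑(scongFinset.filter fun A => (A ^ A.det.val - 1).det ≠ 0) := by
  ext A
  simp [Scong_eq_coe, condH_iff_det_ne_zero]

lemma isUnit_of_mem_Scong : ∀ A ∈ Scong, IsUnit A := by
  simp only [Scong_eq_coe, Finset.mem_coe, isUnit_iff_isUnit_det, isUnit_iff_ne_zero]
  decide

lemma one_mem_Scong : (1 : Matrix (Fin 2) (Fin 2) (ZMod 3)) ∈ Scong := by
  rw [Scong_eq_coe, Finset.mem_coe]
  decide

set_option maxRecDepth 2000 in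
lemma mul_mem_Scong : ∀ A ∈ Scong, ∀ B ∈ Scong, A * B ∈ Scong := by
  simp only [Scong_eq_coe, Finset.mem_coe]
  decide

lemma exists_mul_eq_one_of_mem_Scong : ∀ A ∈ Scong, ∃ B ∈ Scong, A * B = 1 := by
  simp only [Scong_eq_coe, Finset.mem_coe]
  decide

lemma card_Scong : Nat.card Scong = 16 := by
  rw [Scong_eq_coe, Nat.card_coe_set_eq, Set.ncard_coe_finset]
  rfl

lemma card_Scong_condH :
    Nat.card {A : Matrix (Fin 2) (Fin 2) (ZMod 3) // A ∈ Scong ∧ CondH A} = 11 := by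
  rw [← Set.coe_ofPred, setOf_mem_Scong_and_condH, Nat.card_coe_set_eq, Set.ncard_coe_finset]
  decide

/-- The set `S` of the given sixteen matrices is a subgroup of `GL₂(ℤ/3ℤ)` of order `16`
(its elements are invertible, it contains the identity and is closed under multiplication and
inverses), and exactly `11` of its elements satisfy condition (H); in particular the
proportion of elements of `S` satisfying condition (H) is `11/16`. -/
theorem Scong_subgroup_card_condH :
    (∀ A ∈ Scong, IsUnit A) ∧
    (1 : Matrix (Fin 2) (Fin 2) (ZMod 3)) ∈ Scong ∧
    (∀ A ∈ Scong, ∀ B ∈ Scong, A * B ∈ Scong) ∧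
    (∀ A ∈ Scong, ∃ B ∈ Scong, A * B = 1) ∧
    Nat.card Scong = 16 ∧
    Nat.card {A : Matrix (Fin 2) (Fin 2) (ZMod 3) // A ∈ Scong ∧ CondH A} = 11 ∧
    (Nat.card {A : Matrix (Fin 2) (Fin 2) (ZMod 3) // A ∈ Scong ∧ CondH A} : ℚ) /
      (Nat.card Scong : ℚ) = 11 / 16 := by
  refine ⟨isUnit_of_mem_Scong, one_mem_Scong, mul_mem_Scong,
    exists_mul_eq_one_of_mem_Scong, card_Scong, card_Scong_condH, ?_⟩
  rw [card_Scong, card_Scong_condH]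
  norm_num
end
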